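/- arXiv:2008.11356 — 2 statements merged into one kernel-verified Lean document; each statement's English description precedes it below -/
import Mathlib

section
/- For N = 2 users with interference-plus-noise terms I_1, I_2 > 0 and power budget Φ > 0, the quantities β_1 = I_1·γ + I_2·γ² and β_2 = I_2·γ with γ = (√(4·I_2·Φ + (I_1+I_2)²) − I_1 − I_2)/(2·I_2) satisfy β_1 + β_2 = Φ, β_1 > 0, and β_2 > 0. -/
/-!
`γ` is the positive root of `I₂ γ² + (I₁ + I₂) γ = Φ`, so `β₁ + β₂ = I₂ γ² + (I₁ + I₂) γ = Φ`,
and both powers are positive because `γ` is.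
-/

open Real

noncomputable def quadraticPosRoot (a b c : ℝ) : ℝ := (√(4 * a * c + b ^ 2) - b) / (2 * a)

lemma quadraticPosRoot_spec {a b c : ℝ} (ha : a ≠ 0) (hd : 0 ≤ 4 * a * c + b ^ 2) :
    a * quadraticPosRoot a b c ^ 2 + b * quadraticPosRoot a b c = c := by
  have hdiscrim : discrim a b (-c) = √(4 * a * c + b ^ 2) * √(4 * a * c + b ^ 2) := by
    rw [mul_self_sqrt hd, discrim]; ring
  have hroot := (quadratic_eq_zero_iff ha hdiscrim (quadraticPosRoot a b c)).2
    (Or.inl (by rw [quadraticPosRoot]; ring))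
  linear_combination hroot

lemma quadraticPosRoot_pos {a b c : ℝ} (ha : 0 < a) (hc : 0 < c) : 0 < quadraticPosRoot a b c := by
  have hb : b < √(4 * a * c + b ^ 2) :=
    calc b ≤ |b| := le_abs_self b
      _ = √(b ^ 2) := (sqrt_sq_eq_abs b).symm
      _ < √(4 * a * c + b ^ 2) := sqrt_lt_sqrt (sq_nonneg b) (by nlinarith [mul_pos ha hc])
  exact div_pos (sub_pos.2 hb) (by positivity)

theorem relaying_power_feasibility (I₁ I₂ Φ : ℝ) (hI₁ : 0 < I₁) (hI₂ : 0 < I₂)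
    (hΦ : 0 < Φ)
    (γ : ℝ) (hγ : γ = (Real.sqrt (4 * I₂ * Φ + (I₁ + I₂) ^ 2) - I₁ - I₂) / (2 * I₂))
    (β₁ β₂ : ℝ) (hβ₁ : β₁ = I₁ * γ + I₂ * γ ^ 2) (hβ₂ : β₂ = I₂ * γ) :
    β₁ + β₂ = Φ ∧ 0 < β₁ ∧ 0 < β₂ := by
  have hγ_root : γ = quadraticPosRoot I₂ (I₁ + I₂) Φ := by
    rw [hγ, quadraticPosRoot, sub_sub]
  have hγ_pos : 0 < γ := hγ_root ▸ quadraticPosRoot_pos hI₂ hΦ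
  have hγ_spec : I₂ * γ ^ 2 + (I₁ + I₂) * γ = Φ :=
    hγ_root ▸ quadraticPosRoot_spec hI₂.ne' (by positivity)
  subst hβ₁ hβ₂
  refine ⟨by linear_combination hγ_spec, by positivity, by positivity⟩
end

section
/- Let X and Z be independent, X ~ Gamma(x₀, x₀) and Z ~ Gamma(z₀, z₀) with positive-integer shapes x₀, z₀, and let a, b ≥ 0 with at least one positive. Then P[X < a·Z + b] = 1 − (z₀)^{z₀}·e^{−x₀ b}/Γ(z₀) · Σ_{q=0}^{x₀−1} (x₀)^q/q! · Σ_{l=0}^{q} C(q,l) b^{q−l} a^l Γ(z₀+l)/(z₀ + x₀ a)^{z₀+l}. -/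
/-!
Conditionally on `Z = z`, the event is `X < t` with `t = a z + b ≥ 0`, and the Erlang distribution
function is `P[X < t] = 1 - e^{-x₀ t} ∑_{q < x₀} (x₀ t)^q / q!` (fundamental theorem of calculus).
Expanding `(a z + b)^q` binomially turns the expectation over `Z` into a finite sum of Gamma
integrals `∫ z^l e^{-x₀ a z} dΓ(z₀, z₀)(z) = z₀^{z₀} Γ(z₀ + l) / (Γ(z₀) (z₀ + x₀ a)^{z₀ + l})`.
-/

open MeasureTheory ProbabilityTheory Real Set Finset

noncomputable def erlangSurvival (k : ℕ) (u : ℝ) : ℝ :=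
  exp (-u) * ∑ q ∈ range k, u ^ q / q.factorial

lemma erlangSurvival_succ (k : ℕ) :
    erlangSurvival (k + 1) = fun u => erlangSurvival k u + exp (-u) * (u ^ k / k.factorial) := by
  ext u
  rw [erlangSurvival, erlangSurvival, sum_range_succ, mul_add]

lemma erlangSurvival_zero_right {k : ℕ} (hk : 0 < k) : erlangSurvival k 0 = 1 := by
  rw [erlangSurvival, sum_eq_single_of_mem 0 (mem_range.2 hk) fun q _ hq => by simp [hq]]
  simp

lemma hasDerivAt_erlangSurvival {k : ℕ} (hk : 0 < k) (u : ℝ) :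
    HasDerivAt (erlangSurvival k) (-(u ^ (k - 1) / (k - 1).factorial * exp (-u))) u := by
  obtain ⟨k, rfl⟩ := Nat.exists_eq_add_one_of_ne_zero hk.ne'
  rw [Nat.add_sub_cancel]
  induction k with
  | zero => simpa [erlangSurvival_succ, erlangSurvival] using (hasDerivAt_neg u).exp
  | succ k ih =>
    rw [erlangSurvival_succ]
    refine (ih k.succ_pos |>.add <| (hasDerivAt_neg u).exp.mul <|
      (hasDerivAt_pow (k + 1) u).div_const _).congr_deriv ?_
    rw [Nat.factorial_succ]
    push_cast
    field_simp
    ring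

lemma gammaPDFReal_natCast {k : ℕ} (hk : 0 < k) {r x : ℝ} (hx : 0 ≤ x) :
    gammaPDFReal k r x = r ^ k / (k - 1).factorial * x ^ (k - 1) * exp (-(r * x)) := by
  obtain ⟨k, rfl⟩ := Nat.exists_eq_add_one_of_ne_zero hk.ne'
  rw [gammaPDFReal, if_pos hx, Nat.add_sub_cancel, Nat.cast_add_one, add_sub_cancel_right,
    Gamma_nat_eq_factorial, ← Nat.cast_add_one, rpow_natCast, rpow_natCast]

lemma ae_nonneg_gammaMeasure (a r : ℝ) : ∀ᵐ z ∂(gammaMeasure a r), 0 ≤ z := by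
  simp only [ae_iff, not_le]
  exact (withDensity_apply _ measurableSet_Iio).trans (lintegral_gammaPDF_of_nonpos le_rfl)

lemma gammaMeasure_Iio_natCast {k : ℕ} (hk : 0 < k) {r t : ℝ} (hr : 0 < r) (ht : 0 ≤ t) :
    (gammaMeasure k r (Iio t)).toReal = 1 - erlangSurvival k (r * t) := by
  set f : ℝ → ℝ := fun x => r ^ k / (k - 1).factorial * x ^ (k - 1) * exp (-(r * x))
  have hf : Continuous f := by fun_prop
  have hderiv : ∀ x, HasDerivAt (fun x => -erlangSurvival k (r * x)) (f x) x := by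
    intro x
    refine (((hasDerivAt_erlangSurvival hk (r * x)).comp x
      ((hasDerivAt_id x).const_mul r)).neg).congr_deriv ?_
    obtain ⟨k, rfl⟩ := Nat.exists_eq_add_one_of_ne_zero hk.ne'
    simp only [f, Nat.add_sub_cancel, mul_pow, pow_succ]
    ring
  calc (gammaMeasure k r (Iio t)).toReal
      = (∫⁻ x in Ico 0 t, ENNReal.ofReal (f x)).toReal := by
        rw [gammaMeasure, withDensity_apply _ measurableSet_Iio, ← Iio_union_Ico_eq_Iio ht,
          lintegral_union measurableSet_Ico
            ((Iio_disjoint_Ici le_rfl).mono_right Ico_subset_Ici_self),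
          lintegral_gammaPDF_of_nonpos le_rfl, zero_add]
        exact congrArg _ (setLIntegral_congr_fun measurableSet_Ico fun x hx =>
          congrArg _ (gammaPDFReal_natCast hk hx.1))
    _ = ∫ x in 0..t, f x := by
        rw [intervalIntegral.integral_of_le ht, integral_Ioc_eq_integral_Ioo,
          ← integral_Ico_eq_integral_Ioo, integral_eq_lintegral_of_nonneg_ae]
        · exact (ae_restrict_iff' measurableSet_Ico).2 <| ae_of_all _ fun x ⟨hx, _⟩ => by
            positivity
        · exact hf.aestronglyMeasurable
    _ = 1 - erlangSurvival k (r * t) := by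
        rw [intervalIntegral.integral_eq_sub_of_hasDerivAt (fun x _ => hderiv x)
          (hf.intervalIntegrable _ _), mul_zero, erlangSurvival_zero_right hk]
        ring

lemma ProbabilityTheory.IndepFun.toReal_measure_lt_comp {Ω : Type*} [MeasurableSpace Ω]
    {μ : Measure Ω} [IsFiniteMeasure μ] {X Z : Ω → ℝ} (hX : Measurable X) (hZ : Measurable Z)
    (hXZ : IndepFun X Z μ) {f : ℝ → ℝ} (hf : Measurable f) :
    (μ {ω | X ω < f (Z ω)}).toReal = ∫ z, (μ.map X (Iio (f z))).toReal ∂(μ.map Z) := by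
  have hs : MeasurableSet {p : ℝ × ℝ | p.1 < f p.2} :=
    measurableSet_lt measurable_fst (hf.comp measurable_snd)
  rw [show {ω | X ω < f (Z ω)} = (fun ω => (X ω, Z ω)) ⁻¹' {p | p.1 < f p.2} from rfl,
    ← Measure.map_apply (hX.prodMk hZ) hs,
    hXZ.map_prod_eq_prod_map_map hX.aemeasurable hZ.aemeasurable, Measure.prod_apply_symm hs,
    ← integral_toReal (measurable_measure_prodMk_right hs).aemeasurable
      (ae_of_all _ fun _ => measure_lt_top _ _)]
  rfl

lemma integral_pow_mul_exp_neg_mul_gammaMeasure {s ρ c : ℝ} (hs : 0 < s) (hρ : 0 < ρ)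
    (hc : 0 < ρ + c) (l : ℕ) :
    ∫ z, z ^ l * exp (-(c * z)) ∂(gammaMeasure s ρ)
      = ρ ^ s / Gamma s * Gamma (s + l) / (ρ + c) ^ (s + l) := by
  have hpdf : ∀ z ∈ Ioi (0 : ℝ), (gammaPDF s ρ z).toReal • (z ^ l * exp (-(c * z)))
      = ρ ^ s / Gamma s * (z ^ (s + l - 1) * exp (-((ρ + c) * z))) := by
    intro z hz
    rw [gammaPDF, ENNReal.toReal_ofReal (gammaPDFReal_nonneg hs hρ z), gammaPDFReal,
      if_pos (le_of_lt hz), smul_eq_mul, add_sub_right_comm, rpow_add hz, rpow_natCast,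
      add_mul, neg_add, exp_add]
    ring
  rw [gammaMeasure, integral_withDensity_eq_integral_toReal_smul (f := gammaPDF s ρ)
      (measurable_gammaPDFReal s ρ).ennreal_ofReal (ae_of_all _ fun _ => ENNReal.ofReal_lt_top),
    ← setIntegral_eq_integral_of_forall_compl_eq_zero (s := Ici 0) fun z hz => by
      rw [gammaPDF_of_neg (not_le.1 hz), ENNReal.toReal_zero, zero_smul],
    integral_Ici_eq_integral_Ioi, setIntegral_congr_fun measurableSet_Ioi hpdf,
    integral_const_mul, integral_rpow_mul_exp_neg_mul_Ioi (by positivity) hc,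
    div_rpow zero_le_one hc.le, one_rpow]
  ring

lemma integrable_pow_mul_exp_neg_mul_gammaMeasure {s ρ c : ℝ} (hs : 0 < s) (hρ : 0 < ρ)
    (hc : 0 < ρ + c) (l : ℕ) :
    Integrable (fun z => z ^ l * exp (-(c * z))) (gammaMeasure s ρ) :=
  Integrable.of_integral_ne_zero <| by
    rw [integral_pow_mul_exp_neg_mul_gammaMeasure hs hρ hc]
    have := rpow_pos_of_pos hc (s + l)
    positivity

lemma erlangSurvival_mul_add (k : ℕ) (r a b z : ℝ) :
    erlangSurvival k (r * (a * z + b)) = ∑ q ∈ range k, ∑ l ∈ range (q + 1),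
      exp (-r * b) * (r ^ q / q.factorial) * (q.choose l * b ^ (q - l) * a ^ l) *
        (z ^ l * exp (-(r * a * z))) := by
  rw [erlangSurvival, mul_sum]
  refine sum_congr rfl fun q _ => ?_
  rw [mul_pow, add_pow, mul_sum, sum_div, mul_sum]
  refine sum_congr rfl fun l _ => ?_
  rw [show -(r * (a * z + b)) = -r * b + -(r * a * z) by ring, exp_add]
  ring

lemma integrable_erlangSurvival_mul_add_gammaMeasure (k : ℕ) {s ρ r a : ℝ} (hs : 0 < s)
    (hρ : 0 < ρ) (hc : 0 < ρ + r * a) (b : ℝ) :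
    Integrable (fun z => erlangSurvival k (r * (a * z + b))) (gammaMeasure s ρ) := by
  simp_rw [erlangSurvival_mul_add]
  exact integrable_finsetSum _ fun q _ => integrable_finsetSum _ fun l _ =>
    (integrable_pow_mul_exp_neg_mul_gammaMeasure hs hρ hc l).const_mul _

lemma integral_erlangSurvival_mul_add_gammaMeasure (k : ℕ) {s ρ r a : ℝ} (hs : 0 < s)
    (hρ : 0 < ρ) (hc : 0 < ρ + r * a) (b : ℝ) :
    ∫ z, erlangSurvival k (r * (a * z + b)) ∂(gammaMeasure s ρ)
      = ρ ^ s * exp (-r * b) / Gamma s * ∑ q ∈ range k, r ^ q / q.factorial *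
          ∑ l ∈ range (q + 1),
            q.choose l * b ^ (q - l) * a ^ l * Gamma (s + l) / (ρ + r * a) ^ (s + l) := by
  have hint := integrable_pow_mul_exp_neg_mul_gammaMeasure hs hρ hc
  simp_rw [erlangSurvival_mul_add]
  rw [integral_finsetSum _ fun q _ => integrable_finsetSum _ fun l _ => (hint l).const_mul _,
    mul_sum]
  refine sum_congr rfl fun q _ => ?_
  rw [integral_finsetSum _ fun l _ => (hint l).const_mul _, mul_sum, mul_sum]
  refine sum_congr rfl fun l _ => ?_
  rw [integral_const_mul, integral_pow_mul_exp_neg_mul_gammaMeasure hs hρ hc]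
  ring

open MeasureTheory ProbabilityTheory in
theorem gamma_affine_cross_prob_general {Ω : Type*} [MeasurableSpace Ω]
    (μ : Measure Ω) [IsProbabilityMeasure μ]
    (X Z : Ω → ℝ) (hX : Measurable X) (hZ : Measurable Z)
    (x₀ z₀ : ℕ) (hx₀ : 0 < x₀) (hz₀ : 0 < z₀)
    (hXlaw : μ.map X = gammaMeasure x₀ x₀)
    (hZlaw : μ.map Z = gammaMeasure z₀ z₀)
    (hIndep : IndepFun X Z μ)
    (a b : ℝ) (ha : 0 ≤ a) (hb : 0 ≤ b) :
    (μ {ω | X ω < a * Z ω + b}).toReal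
      = 1 - (z₀ : ℝ) ^ (z₀ : ℕ) * Real.exp (-(x₀ : ℝ) * b) / Real.Gamma z₀ *
          ∑ q ∈ Finset.range x₀, (x₀ : ℝ) ^ q / (Nat.factorial q : ℝ) *
            ∑ l ∈ Finset.range (q + 1),
              (q.choose l : ℝ) * b ^ (q - l) * a ^ l * Real.Gamma (z₀ + l) /
                ((z₀ : ℝ) + (x₀ : ℝ) * a) ^ ((z₀ : ℕ) + l) := by
  have hx₀' : (0 : ℝ) < x₀ := Nat.cast_pos.2 hx₀
  have hz₀' : (0 : ℝ) < z₀ := Nat.cast_pos.2 hz₀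
  have hc : (0 : ℝ) < z₀ + x₀ * a := by positivity
  have := isProbabilityMeasure_gammaMeasure hz₀' hz₀'
  calc (μ {ω | X ω < a * Z ω + b}).toReal
      = ∫ z, (gammaMeasure x₀ x₀ (Iio (a * z + b))).toReal ∂(gammaMeasure z₀ z₀) := by
        rw [← hXlaw, ← hZlaw]
        exact hIndep.toReal_measure_lt_comp hX hZ (f := fun z => a * z + b) (by fun_prop)
    _ = ∫ z, (1 - erlangSurvival x₀ (x₀ * (a * z + b))) ∂(gammaMeasure z₀ z₀) := by
        refine integral_congr_ae ?_
        filter_upwards [ae_nonneg_gammaMeasure z₀ z₀] with z hz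
        exact gammaMeasure_Iio_natCast hx₀ hx₀' (by positivity)
    _ = 1 - ∫ z, erlangSurvival x₀ (x₀ * (a * z + b)) ∂(gammaMeasure z₀ z₀) := by
        rw [integral_sub (integrable_const 1)
          (integrable_erlangSurvival_mul_add_gammaMeasure x₀ hz₀' hz₀' hc b),
          integral_const, probReal_univ, one_smul]
    _ = _ := by
        rw [integral_erlangSurvival_mul_add_gammaMeasure x₀ hz₀' hz₀' hc b]
        simp only [rpow_natCast, ← Nat.cast_add]

open MeasureTheory ProbabilityTheory in
theorem gamma_affine_cross_prob {Ω : Type*} [MeasurableSpace Ω]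
    (μ : Measure Ω) [IsProbabilityMeasure μ]
    (X Z : Ω → ℝ) (hX : Measurable X) (hZ : Measurable Z)
    (x₀ z₀ : ℕ) (hx₀ : 0 < x₀) (hz₀ : 0 < z₀)
    (hXlaw : μ.map X = gammaMeasure x₀ x₀)
    (hZlaw : μ.map Z = gammaMeasure z₀ z₀)
    (hIndep : IndepFun X Z μ)
    (a b : ℝ) (ha : 0 ≤ a) (hb : 0 ≤ b) (hab : 0 < a ∨ 0 < b) :
    (μ {ω | X ω < a * Z ω + b}).toReal
      = 1 - (z₀ : ℝ) ^ (z₀ : ℕ) * Real.exp (-(x₀ : ℝ) * b) / Real.Gamma z₀ *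
          ∑ q ∈ Finset.range x₀, (x₀ : ℝ) ^ q / (Nat.factorial q : ℝ) *
            ∑ l ∈ Finset.range (q + 1),
              (q.choose l : ℝ) * b ^ (q - l) * a ^ l * Real.Gamma (z₀ + l) /
                ((z₀ : ℝ) + (x₀ : ℝ) * a) ^ ((z₀ : ℕ) + l) :=
  gamma_affine_cross_prob_general μ X Z hX hZ x₀ z₀ hx₀ hz₀ hXlaw hZlaw hIndep a b ha hb
end
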